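/- For every integer n ≥ 1 and every real number r with −1 < r < 1 and r ≠ 0, the sum ∑_{i=1}^n i^r is at most (r/(r+1)) · n^r (n+1)^r / ((n+1)^r − n^r). -/

import Mathlib

/-!
Let `F x = r / (r + 1) * (x ^ r * (x + 1) ^ r / ((x + 1) ^ r - x ^ r))`, so that `F 0 = 0`. By
induction on `n` it suffices that `F x + (x + 1) ^ r ≤ F (x + 1)` for `x ≥ 0`; at `x = 0` this is
Bernoulli's inequality for `2 ^ r`. For `x > 0`, divide by `(x + 1) ^ r` and put `t = 1 / (x + 1)`:
the claim becomes `(1 - t) ^ r + (1 + t) ^ r ≤ (1 - r) (1 - t) ^ r (1 + t) ^ r + 1 + r`, an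
equality at `t = 0`. The `t`-derivative of the difference is a positive multiple of
`r ((1 + t) ^ (1 - r) - (1 - t) ^ (1 - r) - 2 (1 - r) t)`, which again vanishes at `t = 0` and
whose own derivative has the right sign by Bernoulli's inequality.
-/

open Real Set

theorem mul_rpow_one_add_le {p s : ℝ} (hs : -1 < s) (hp : p ≤ 1) :
    p * (1 + s) ^ p ≤ p * (1 + p * s) := by
  rcases le_total 0 p with hp0 | hp0
  · exact mul_le_mul_of_nonneg_left (rpow_one_add_le_one_add_mul_self hs.le hp0 hp) hp0
  · refine mul_le_mul_of_nonpos_left ?_ hp0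
    have hs0 : 0 < 1 + s := by linarith
    -- for `p ≤ 0` this is the tangent-line bound `exp y ≥ 1 + y` combined with `log (1 + s) ≤ s`
    calc 1 + p * s ≤ 1 + log (1 + s) * p := by
          nlinarith [log_le_sub_one_of_pos hs0]
      _ ≤ (1 + s) ^ p := by rw [rpow_def_of_pos hs0]; linarith [add_one_le_exp (log (1 + s) * p)]

theorem mul_rpow_one_add_add_rpow_one_sub_le {p u : ℝ} (hu : |u| < 1) (hp : p ≤ 1) :
    p * ((1 + u) ^ p + (1 - u) ^ p) ≤ 2 * p := by
  obtain ⟨hu₁, hu₂⟩ := abs_lt.1 hu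
  have h₁ := mul_rpow_one_add_le (s := u) hu₁ hp
  have h₂ := mul_rpow_one_add_le (s := -u) (by linarith) hp
  rw [← sub_eq_add_neg] at h₂
  linarith

theorem hasDerivAt_one_add_rpow (p : ℝ) {u : ℝ} (hu : -1 < u) :
    HasDerivAt (fun u => (1 + u) ^ p) (p * (1 + u) ^ (p - 1)) u := by
  simpa using ((hasDerivAt_id u).const_add 1).rpow_const (p := p) (Or.inl (by simp; linarith))

theorem hasDerivAt_one_sub_rpow (p : ℝ) {u : ℝ} (hu : u < 1) :
    HasDerivAt (fun u => (1 - u) ^ p) (-(p * (1 - u) ^ (p - 1))) u := by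
  simpa using ((hasDerivAt_id u).const_sub 1).rpow_const (p := p) (Or.inl (by simp; linarith))

theorem monotoneOn_Ico_of_hasDerivAt_nonneg {f f' : ℝ → ℝ} {a b : ℝ}
    (hf : ∀ x ∈ Ico a b, HasDerivAt f (f' x) x) (hf' : ∀ x ∈ Ioo a b, 0 ≤ f' x) :
    MonotoneOn f (Ico a b) := by
  refine monotoneOn_of_hasDerivWithinAt_nonneg (f' := f') (convex_Ico a b)
    (fun x hx => (hf x hx).continuousAt.continuousWithinAt) (fun x hx => ?_) ?_
  · rw [interior_Ico] at hx
    exact (hf x (Ioo_subset_Ico_self hx)).hasDerivWithinAt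
  · simpa only [interior_Ico] using hf'

theorem one_sub_mul_two_mul_le_rpow_one_add_sub_rpow_one_sub {s t : ℝ} (hs₀ : 0 ≤ s) (hs₂ : s ≤ 2)
    (ht : t ∈ Ico 0 1) : (1 - s) * (2 * s * t) ≤ (1 - s) * ((1 + t) ^ s - (1 - t) ^ s) := by
  let f : ℝ → ℝ := fun u => (1 - s) * ((1 + u) ^ s - (1 - u) ^ s - 2 * s * u)
  have hf : ∀ u ∈ Ico (0 : ℝ) 1, HasDerivAt f
      ((1 - s) * (s * (1 + u) ^ (s - 1) - -(s * (1 - u) ^ (s - 1)) - 2 * s * 1)) u :=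
    fun u hu => (((hasDerivAt_one_add_rpow s (by linarith [hu.1])).sub
      (hasDerivAt_one_sub_rpow s hu.2)).sub ((hasDerivAt_id u).const_mul (2 * s))).const_mul _
  have hf' : ∀ u ∈ Ioo (0 : ℝ) 1,
      0 ≤ (1 - s) * (s * (1 + u) ^ (s - 1) - -(s * (1 - u) ^ (s - 1)) - 2 * s * 1) := by
    intro u hu
    have := mul_rpow_one_add_add_rpow_one_sub_le (p := s - 1)
      (abs_lt.2 ⟨by linarith [hu.1], hu.2⟩) (by linarith)
    nlinarith
  have := monotoneOn_Ico_of_hasDerivAt_nonneg hf hf' (left_mem_Ico.2 one_pos) ht ht.1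
  simp only [f, add_zero, sub_zero, one_rpow, mul_zero, sub_self] at this
  linarith

theorem rpow_one_sub_add_rpow_one_add_le {r t : ℝ} (hr₁ : -1 ≤ r) (hr₂ : r ≤ 1)
    (ht : t ∈ Ico 0 1) :
    (1 - t) ^ r + (1 + t) ^ r ≤ (1 - r) * ((1 - t) ^ r * (1 + t) ^ r) + (1 + r) := by
  let G : ℝ → ℝ := fun u =>
    (1 - r) * ((1 - u) ^ r * (1 + u) ^ r) + (1 + r) - ((1 - u) ^ r + (1 + u) ^ r)
  have hG : ∀ u ∈ Ico (0 : ℝ) 1, HasDerivAt G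
      ((1 - r) * (-(r * (1 - u) ^ (r - 1)) * (1 + u) ^ r + (1 - u) ^ r * (r * (1 + u) ^ (r - 1)))
        - (-(r * (1 - u) ^ (r - 1)) + r * (1 + u) ^ (r - 1))) u := by
    intro u hu
    have h₁ := hasDerivAt_one_sub_rpow r hu.2
    have h₂ := hasDerivAt_one_add_rpow r (u := u) (by linarith [hu.1])
    exact (((h₁.mul h₂).const_mul _).add_const _).sub (h₁.add h₂)
  have hG' : ∀ u ∈ Ioo (0 : ℝ) 1,
      0 ≤ (1 - r) * (-(r * (1 - u) ^ (r - 1)) * (1 + u) ^ r + (1 - u) ^ r * (r * (1 + u) ^ (r - 1)))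
        - (-(r * (1 - u) ^ (r - 1)) + r * (1 + u) ^ (r - 1)) := by
    intro u hu
    have h₁ : 0 < 1 - u := by linarith [hu.2]
    have h₂ : 0 < 1 + u := by linarith [hu.1]
    have hQ : (1 - u) ^ r = (1 - u) * (1 - u) ^ (r - 1) := by
      rw [rpow_sub_one h₁.ne']; field_simp
    have hR : (1 + u) ^ r = (1 + u) * (1 + u) ^ (r - 1) := by
      rw [rpow_sub_one h₂.ne']; field_simp
    have hQ' : (1 - u) ^ (1 - r) * (1 - u) ^ (r - 1) = 1 := by
      rw [← rpow_add h₁]; simp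
    have hR' : (1 + u) ^ (1 - r) * (1 + u) ^ (r - 1) = 1 := by
      rw [← rpow_add h₂]; simp
    set Q := (1 - u) ^ (r - 1)
    set R := (1 + u) ^ (r - 1)
    have hfactor : (1 - r) * (-(r * Q) * (1 + u) ^ r + (1 - u) ^ r * (r * R)) - (-(r * Q) + r * R)
        = Q * R * ((1 - (1 - r)) * ((1 + u) ^ (1 - r) - (1 - u) ^ (1 - r) - 2 * (1 - r) * u)) := by
      rw [hQ, hR]
      linear_combination (-(r * Q)) * hR' + (r * R) * hQ'
    rw [hfactor]
    have := one_sub_mul_two_mul_le_rpow_one_add_sub_rpow_one_sub (s := 1 - r) (t := u)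
      (by linarith) (by linarith) (Ioo_subset_Ico_self hu)
    exact mul_nonneg (by positivity) (by linarith)
  have := monotoneOn_Ico_of_hasDerivAt_nonneg hG hG' (left_mem_Ico.2 one_pos) ht ht.1
  simp only [G, add_zero, sub_zero, one_rpow, mul_one] at this
  linarith

theorem mul_rpow_sub_one_pos {r x : ℝ} (hr : r ≠ 0) (hx : 1 < x) : 0 < r * (x ^ r - 1) := by
  rcases hr.lt_or_gt with hr | hr
  · exact mul_pos_of_neg_of_neg hr (by linarith [rpow_lt_one_of_one_lt_of_neg hx hr])
  · exact mul_pos hr (by linarith [one_lt_rpow hx hr])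

theorem mul_one_sub_rpow_pos {r x : ℝ} (hr : r ≠ 0) (hx₀ : 0 < x) (hx₁ : x < 1) :
    0 < r * (1 - x ^ r) := by
  rcases hr.lt_or_gt with hr | hr
  · exact mul_pos_of_neg_of_neg hr (by linarith [one_lt_rpow_of_pos_of_lt_one_of_neg hx₀ hx₁ hr])
  · exact mul_pos hr (by linarith [rpow_lt_one hx₀.le hx₁ hr])

noncomputable def levinSteckinBound (r x : ℝ) : ℝ :=
  r / (r + 1) * (x ^ r * (x + 1) ^ r / ((x + 1) ^ r - x ^ r))

-- For `r < 0` this rests on the junk value `0 ^ r = 0`; it lets the induction start at `n = 0`.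
theorem levinSteckinBound_zero {r : ℝ} (hr : r ≠ 0) : levinSteckinBound r 0 = 0 := by
  simp [levinSteckinBound, zero_rpow hr]

theorem one_le_levinSteckinBound_one {r : ℝ} (hr₁ : -1 < r) (hr₂ : r ≤ 1) (hr₀ : r ≠ 0) :
    1 ≤ levinSteckinBound r 1 := by
  have hbern : r * 2 ^ r ≤ r * (1 + r) := by
    simpa [one_add_one_eq_two] using mul_rpow_one_add_le (p := r) (s := 1) (by norm_num) hr₂
  have hsign : 0 < r * (2 ^ r - 1) := mul_rpow_sub_one_pos hr₀ one_lt_two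
  have h₁ : r + 1 ≠ 0 := by linarith
  have h₂ : (2 : ℝ) ^ r - 1 ≠ 0 := fun h => by simp [h] at hsign
  have hbound : levinSteckinBound r 1 = r * 2 ^ r * r / ((r + 1) * (r * (2 ^ r - 1))) := by
    rw [levinSteckinBound, one_rpow, one_add_one_eq_two]
    field_simp
  rw [hbound, one_le_div (mul_pos (by linarith) hsign)]
  nlinarith

theorem levinSteckinBound_add_rpow_le_of_pos {r x : ℝ} (hr₁ : -1 < r) (hr₂ : r ≤ 1)
    (hr₀ : r ≠ 0) (hx : 0 < x) :
    levinSteckinBound r x + (x + 1) ^ r ≤ levinSteckinBound r (x + 1) := by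
  have ht : 1 / (x + 1) ∈ Ioo 0 1 := ⟨by positivity, by rw [div_lt_one (by linarith)]; linarith⟩
  have ha : x ^ r = (x + 1) ^ r * (1 - 1 / (x + 1)) ^ r := by
    rw [← mul_rpow (by linarith) (by linarith [ht.2])]
    congr 1
    field_simp
    ring
  have hb : (x + 1 + 1) ^ r = (x + 1) ^ r * (1 + 1 / (x + 1)) ^ r := by
    rw [← mul_rpow (by linarith) (by linarith [ht.1])]
    congr 1
    field_simp
  have hab : 0 < (1 - (1 - 1 / (x + 1)) ^ r) * ((1 + 1 / (x + 1)) ^ r - 1) := by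
    have := mul_pos
      (mul_one_sub_rpow_pos (x := 1 - 1 / (x + 1)) hr₀ (by linarith [ht.2]) (by linarith [ht.1]))
      (mul_rpow_sub_one_pos (x := 1 + 1 / (x + 1)) hr₀ (by linarith [ht.1]))
    nlinarith [sq_nonneg r]
  have hkey := rpow_one_sub_add_rpow_one_add_le hr₁.le hr₂ (Ioo_subset_Ico_self ht)
  have hX : 0 < (x + 1) ^ r := by positivity
  rw [levinSteckinBound, levinSteckinBound, ha, hb]
  generalize (x + 1) ^ r = X at *
  generalize (1 - 1 / (x + 1)) ^ r = a at *
  generalize (1 + 1 / (x + 1)) ^ r = b at *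
  have : 1 - a ≠ 0 := fun h => by simp [h] at hab
  have : b - 1 ≠ 0 := fun h => by simp [h] at hab
  have : r + 1 ≠ 0 := by linarith
  have hdiff : r / (r + 1) * (X * (X * b) / (X * b - X))
        - (r / (r + 1) * (X * a * X / (X - X * a)) + X)
      = X * ((1 - r) * (a * b) + (1 + r) - (a + b)) / ((r + 1) * ((1 - a) * (b - 1))) := by
    field_simp
    ring
  rw [← sub_nonneg, hdiff]
  exact div_nonneg (mul_nonneg hX.le (by linarith)) (mul_pos (by linarith) hab).le

theorem levinSteckinBound_add_rpow_le {r x : ℝ} (hr₁ : -1 < r) (hr₂ : r ≤ 1) (hr₀ : r ≠ 0)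
    (hx : 0 ≤ x) : levinSteckinBound r x + (x + 1) ^ r ≤ levinSteckinBound r (x + 1) := by
  rcases hx.eq_or_lt with rfl | hx
  · simpa [levinSteckinBound_zero hr₀] using one_le_levinSteckinBound_one hr₁ hr₂ hr₀
  · exact levinSteckinBound_add_rpow_le_of_pos hr₁ hr₂ hr₀ hx

theorem levin_steckin_reversed_general (n : ℕ) (r : ℝ) (hr1 : -1 < r) (hr2 : r < 1)
    (hr0 : r ≠ 0) :
    ∑ i ∈ Finset.Icc 1 n, (i : ℝ) ^ r ≤
      (r / (r + 1)) * ((n : ℝ) ^ r * (n + 1 : ℝ) ^ r / ((n + 1 : ℝ) ^ r - (n : ℝ) ^ r)) := by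
  change _ ≤ levinSteckinBound r n
  induction n with
  | zero => simp [levinSteckinBound_zero hr0]
  | succ n ih =>
    rw [Finset.sum_Icc_succ_top (by omega), Nat.cast_succ]
    exact (add_le_add_left ih _).trans
      (levinSteckinBound_add_rpow_le hr1 hr2.le hr0 n.cast_nonneg)

theorem levin_steckin_reversed (n : ℕ) (hn : 1 ≤ n) (r : ℝ) (hr1 : -1 < r) (hr2 : r < 1)
    (hr0 : r ≠ 0) :
    ∑ i ∈ Finset.Icc 1 n, (i : ℝ) ^ r ≤
      (r / (r + 1)) * ((n : ℝ) ^ r * (n + 1 : ℝ) ^ r / ((n + 1 : ℝ) ^ r - (n : ℝ) ^ r)) :=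
  levin_steckin_reversed_general n r hr1 hr2 hr0
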